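/- arXiv:2003.11953 — 6 statements merged into one kernel-verified Lean document; each statement's English description precedes it below -/
import Mathlib

section
/- For f, g ∈ Map([0,1],[0,1]), define (f ⊓ g)(x) = sup{min(f(y), g(z)) : min(y,z) = x}. Then (f ⊓ g)(x) = min( max(f(x), g(x)), min(f^R(x), g^R(x)) ) for all x ∈ [0,1]. -/
open unitInterval

instance : Fact ((0:ℝ) ≤ 1) := ⟨zero_le_one⟩

/-- `f^L x = sup {f y : y ≤ x}` -/
noncomputable def fL (f : I → I) (x : I) : I := sSup (f '' {y | y ≤ x})

/-- `f^R x = sup {f y : y ≥ x}` -/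
noncomputable def fR (f : I → I) (x : I) : I := sSup (f '' {y | x ≤ y})

/-- meet convolution `(f ⊓ g)(x) = sup { min (f y) (g z) : min y z = x }` -/
noncomputable def meetConv (f g : I → I) (x : I) : I :=
  sSup {v | ∃ y z, y ⊓ z = x ∧ v = f y ⊓ g z}

lemma meetConv_comm (f g : I → I) (x : I) : meetConv f g x = meetConv g f x := by
  unfold meetConv
  congr 1
  ext v
  constructor
  · rintro ⟨y, z, h, rfl⟩
    exact ⟨z, y, by rwa [inf_comm], inf_comm _ _⟩
  · rintro ⟨y, z, h, rfl⟩
    exact ⟨z, y, by rwa [inf_comm], inf_comm _ _⟩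

lemma self_le_fR (f : I → I) (x : I) : f x ≤ fR f x :=
  le_sSup ⟨x, le_refl x, rfl⟩

lemma key (f g : I → I) (x : I) (h : g x ≤ f x) :
    (f x ⊔ g x) ⊓ (fR f x ⊓ fR g x) ≤ meetConv f g x := by
  rw [sup_eq_left.2 h, ← inf_assoc, inf_eq_left.2 (self_le_fR f x)]
  rw [fR, inf_sSup_eq]
  apply iSup₂_le
  rintro v ⟨z, hz, rfl⟩
  exact le_sSup ⟨x, z, inf_eq_left.2 hz, rfl⟩

theorem stmt_7 (f g : I → I) (x : I) :
    meetConv f g x = (f x ⊔ g x) ⊓ (fR f x ⊓ fR g x) := by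
  apply le_antisymm
  · apply sSup_le
    rintro v ⟨y, z, hyz, rfl⟩
    have hy : x ≤ y := hyz ▸ inf_le_left
    have hz : x ≤ z := hyz ▸ inf_le_right
    refine le_inf ?_ (le_inf ?_ ?_)
    · rcases le_total y z with hle | hle
      · rw [inf_eq_left.2 hle] at hyz
        exact le_trans inf_le_left (hyz ▸ le_sup_left)
      · rw [inf_eq_right.2 hle] at hyz
        exact le_trans inf_le_right (hyz ▸ le_sup_right)
    · exact le_trans inf_le_left (le_sSup ⟨y, hy, rfl⟩)
    · exact le_trans inf_le_right (le_sSup ⟨z, hz, rfl⟩)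
  · rcases le_total (g x) (f x) with h | h
    · exact key f g x h
    · calc (f x ⊔ g x) ⊓ (fR f x ⊓ fR g x)
          = (g x ⊔ f x) ⊓ (fR g x ⊓ fR f x) := by rw [sup_comm, inf_comm (fR f x)]
        _ ≤ meetConv g f x := key g f x h
        _ = meetConv f g x := (meetConv_comm f g x).symm
end

section
/- Let f, g : [0,1] → [0,1] be normal and convex. Then (f ⊓ g)^L = f^L ∨ g^L (pointwise maximum) and (f ⊓ g)^R = f^R ∧ g^R (pointwise minimum). -/
open unitInterval

theorem stmt_9 (f g : I → I)
    (hnf : sSup (Set.range f) = 1) (hng : sSup (Set.range g) = 1)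
    (hcf : ∀ x y z : I, x ≤ y → y ≤ z → f x ⊓ f z ≤ f y)
    (hcg : ∀ x y z : I, x ≤ y → y ≤ z → g x ⊓ g z ≤ g y) :
    (∀ x, fL (meetConv f g) x = fL f x ⊔ fL g x) ∧
    (∀ x, fR (meetConv f g) x = fR f x ⊓ fR g x) := by
  have htop : (1 : I) = ⊤ := rfl
  constructor
  · intro x
    apply le_antisymm
    · apply sSup_le
      rintro v ⟨w, hw, rfl⟩
      apply sSup_le
      rintro v ⟨y, z, hyz, rfl⟩
      have hle : y ⊓ z ≤ x := hyz ▸ hw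
      rcases le_total y z with h | h
      · have hy : y ≤ x := by simpa [inf_eq_left.mpr h] using hle
        exact le_sup_of_le_left (inf_le_left.trans (le_sSup ⟨y, hy, rfl⟩))
      · have hz : z ≤ x := by simpa [inf_eq_right.mpr h] using hle
        exact le_sup_of_le_right (inf_le_right.trans (le_sSup ⟨z, hz, rfl⟩))
    · apply sup_le
      · apply sSup_le
        rintro v ⟨y, hy, rfl⟩
        have key : ∀ z, f y ⊓ g z ≤ fL (meetConv f g) x := by
          intro z
          calc f y ⊓ g z ≤ meetConv f g (y ⊓ z) := le_sSup ⟨y, z, rfl, rfl⟩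
            _ ≤ fL (meetConv f g) x :=
              le_sSup ⟨y ⊓ z, show y ⊓ z ≤ x from le_trans inf_le_left hy, rfl⟩
        have : f y ⊓ sSup (Set.range g) ≤ fL (meetConv f g) x := by
          rw [inf_sSup_eq]
          exact iSup₂_le (by rintro b ⟨z, rfl⟩; exact key z)
        simpa [hng, htop] using this
      · apply sSup_le
        rintro v ⟨z, hz, rfl⟩
        have key : ∀ y, f y ⊓ g z ≤ fL (meetConv f g) x := by
          intro y
          calc f y ⊓ g z ≤ meetConv f g (y ⊓ z) := le_sSup ⟨y, z, rfl, rfl⟩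
            _ ≤ fL (meetConv f g) x :=
              le_sSup ⟨y ⊓ z, show y ⊓ z ≤ x from le_trans inf_le_right hz, rfl⟩
        have : sSup (Set.range f) ⊓ g z ≤ fL (meetConv f g) x := by
          rw [sSup_inf_eq]
          exact iSup₂_le (by rintro b ⟨y, rfl⟩; exact key y)
        simpa [hnf, htop] using this
  · intro x
    apply le_antisymm
    · apply sSup_le
      rintro v ⟨w, hw, rfl⟩
      apply sSup_le
      rintro v ⟨y, z, hyz, rfl⟩
      have hx : x ≤ y ⊓ z := hyz ▸ hw
      exact le_inf
        (inf_le_left.trans (le_sSup ⟨y, hx.trans inf_le_left, rfl⟩))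
        (inf_le_right.trans (le_sSup ⟨z, hx.trans inf_le_right, rfl⟩))
    · have key : ∀ y z : I, x ≤ y → x ≤ z →
          f y ⊓ g z ≤ fR (meetConv f g) x := by
        intro y z hy hz
        calc f y ⊓ g z ≤ meetConv f g (y ⊓ z) := le_sSup ⟨y, z, rfl, rfl⟩
          _ ≤ fR (meetConv f g) x := le_sSup ⟨y ⊓ z, le_inf hy hz, rfl⟩
      unfold fR
      rw [sSup_inf_sSup]
      apply iSup_le
      rintro ⟨a, b⟩
      apply iSup_le
      rintro ⟨⟨y, hy, rfl⟩, ⟨z, hz, rfl⟩⟩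
      exact key y z hy hz
end

section
/- Let f, g : [0,1] → [0,1] be normal and convex. Then f ⊓ g = f (i.e., f ⊑ g) if and only if g^L ≤ f^L pointwise and f^R ≤ g^R pointwise. -/
open unitInterval

/-!
Both directions rest on the infinite distributivity of `min` over `sup` in `[0,1]`.

If `f ⊓ g = f`, then `min (f y) (g z) ≤ f (min y z)`; taking `y ≥ z` gives
`min (f^R z) (g z) ≤ f z`. Normality of `f` means `f^L z ⊔ f^R z = 1`, hence
`g z ≤ f^L z ⊔ f z = f^L z`. Every term of `(f ⊓ g)(y)` is at most `g^R y`, so `f ≤ g^R`.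
Both pointwise bounds pass to the envelopes.

Conversely, a term `min (f y) (g z)` with `z ≤ y` is at most `min (f y) (f^L z) ≤ f z` by
convexity, and `f x = min (f x) (g^R x)` is the supremum of the terms `min (f x) (g z)`, `z ≥ x`.
-/

section Envelopes

variable (f g : I → I)

lemma fL_mono : Monotone (fL f) :=
  fun _ _ hxy => sSup_le_sSup (Set.image_mono fun _ hy => le_trans hy hxy)

lemma fR_anti : Antitone (fR f) :=
  fun _ _ hxy => sSup_le_sSup (Set.image_mono fun _ hy => le_trans hxy hy)

lemma le_fL (x : I) : f x ≤ fL f x :=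
  le_sSup ⟨x, le_refl x, rfl⟩

lemma le_fR (x : I) : f x ≤ fR f x :=
  le_sSup ⟨x, le_refl x, rfl⟩

lemma fL_le_fL_of_le_fL (h : ∀ x, g x ≤ fL f x) (x : I) : fL g x ≤ fL f x :=
  sSup_le <| Set.forall_mem_image.2 fun _ hy => (h _).trans (fL_mono f hy)

lemma fR_le_fR_of_le_fR (h : ∀ x, f x ≤ fR g x) (x : I) : fR f x ≤ fR g x :=
  sSup_le <| Set.forall_mem_image.2 fun _ hy => (h _).trans (fR_anti g hy)

lemma fL_sup_fR_eq_one (hnf : sSup (Set.range f) = 1) (x : I) : fL f x ⊔ fR f x = 1 := by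
  refine le_antisymm le_one' ?_
  rw [← hnf]
  refine sSup_le <| Set.forall_mem_range.2 fun y => ?_
  rcases le_total y x with hyx | hxy
  · exact le_sup_of_le_left (le_sSup ⟨y, hyx, rfl⟩)
  · exact le_sup_of_le_right (le_sSup ⟨y, hxy, rfl⟩)

lemma fL_inf_le_of_convex (hcf : ∀ x y z : I, x ≤ y → y ≤ z → f x ⊓ f z ≤ f y)
    {y z : I} (hzy : z ≤ y) : fL f z ⊓ f y ≤ f z := by
  rw [fL, sSup_image, iSup₂_inf_eq]
  exact iSup₂_le fun a ha => hcf a z y ha hzy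

end Envelopes

section MeetConv

variable (f g : I → I)

lemma inf_le_meetConv (y z : I) : f y ⊓ g z ≤ meetConv f g (y ⊓ z) :=
  le_sSup ⟨y, z, rfl, rfl⟩

lemma meetConv_le_fR_right (x : I) : meetConv f g x ≤ fR g x := by
  refine sSup_le ?_
  rintro _ ⟨y, z, rfl, rfl⟩
  exact inf_le_right.trans (le_sSup ⟨z, (inf_le_right : y ⊓ z ≤ z), rfl⟩)

lemma fR_inf_le_of_meetConv_eq (h : meetConv f g = f) (z : I) : fR f z ⊓ g z ≤ f z := by
  rw [fR, sSup_image, iSup₂_inf_eq]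
  refine iSup₂_le fun y hzy => ?_
  simpa only [h, inf_eq_right.2 (show z ≤ y from hzy)] using inf_le_meetConv f g y z

lemma le_fL_of_meetConv_eq (hnf : sSup (Set.range f) = 1) (h : meetConv f g = f) (z : I) :
    g z ≤ fL f z :=
  calc g z = g z ⊓ (fL f z ⊔ fR f z) := by rw [fL_sup_fR_eq_one f hnf, inf_of_le_left le_one']
    _ = g z ⊓ fL f z ⊔ fR f z ⊓ g z := by rw [inf_sup_left, inf_comm (g z) (fR f z)]
    _ ≤ fL f z := sup_le inf_le_right ((fR_inf_le_of_meetConv_eq f g h z).trans (le_fL f z))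

lemma meetConv_le_of_convex (hcf : ∀ x y z : I, x ≤ y → y ≤ z → f x ⊓ f z ≤ f y)
    (hL : ∀ x, fL g x ≤ fL f x) (x : I) : meetConv f g x ≤ f x := by
  refine sSup_le ?_
  rintro _ ⟨y, z, rfl, rfl⟩
  rcases le_total y z with hyz | hzy
  · rw [inf_eq_left.2 hyz]
    exact inf_le_left
  · rw [inf_eq_right.2 hzy]
    calc f y ⊓ g z ≤ fL f z ⊓ f y := by
          rw [inf_comm]
          exact inf_le_inf_right _ ((le_fL g z).trans (hL z))
      _ ≤ f z := fL_inf_le_of_convex f hcf hzy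

lemma le_meetConv (hR : ∀ x, fR f x ≤ fR g x) (x : I) : f x ≤ meetConv f g x :=
  calc f x = f x ⊓ fR g x := (inf_eq_left.2 ((le_fR f x).trans (hR x))).symm
    _ = ⨆ z ∈ {z | x ≤ z}, f x ⊓ g z := by rw [fR, sSup_image, inf_iSup₂_eq]
    _ ≤ meetConv f g x := iSup₂_le fun z hxz => by
          simpa only [inf_eq_left.2 (show x ≤ z from hxz)] using inf_le_meetConv f g x z

end MeetConv

theorem stmt_11_general (f g : I → I)
    (hnf : sSup (Set.range f) = 1)
    (hcf : ∀ x y z : I, x ≤ y → y ≤ z → f x ⊓ f z ≤ f y) :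
    meetConv f g = f ↔ ((∀ x, fL g x ≤ fL f x) ∧ (∀ x, fR f x ≤ fR g x)) := by
  constructor
  · intro h
    exact ⟨fL_le_fL_of_le_fL f g (le_fL_of_meetConv_eq f g hnf h),
      fR_le_fR_of_le_fR f g fun y => h ▸ meetConv_le_fR_right f g y⟩
  · rintro ⟨hL, hR⟩
    funext x
    exact le_antisymm (meetConv_le_of_convex f g hcf hL x) (le_meetConv f g hR x)

theorem stmt_11 (f g : I → I)
    (hnf : sSup (Set.range f) = 1) (hng : sSup (Set.range g) = 1)
    (hcf : ∀ x y z : I, x ≤ y → y ≤ z → f x ⊓ f z ≤ f y)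
    (hcg : ∀ x y z : I, x ≤ y → y ≤ z → g x ⊓ g z ≤ g y) :
    meetConv f g = f ↔ ((∀ x, fL g x ≤ fL f x) ∧ (∀ x, fR f x ≤ fR g x)) :=
  stmt_11_general f g hnf hcf
end

section
/- For f, g ∈ Map([0,1],[0,1]), the relation f ⊑ g (i.e., f ⊓ g = f) holds if and only if min(f^R(x), g(x)) ≤ f(x) ≤ g^R(x) for all x ∈ [0,1]. -/
open unitInterval

lemma meetConv_eq (f g : I → I) (x : I) :
    meetConv f g x = (f x ⊓ fR g x) ⊔ (fR f x ⊓ g x) := by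
  apply le_antisymm
  · apply sSup_le
    rintro v ⟨y, z, hyz, rfl⟩
    rcases le_total y z with h | h
    · rw [inf_eq_left.mpr h] at hyz; subst hyz
      exact le_sup_of_le_left (inf_le_inf_left _ (le_sSup ⟨z, h, rfl⟩))
    · rw [inf_eq_right.mpr h] at hyz; subst hyz
      exact le_sup_of_le_right (inf_le_inf_right _ (le_sSup ⟨y, h, rfl⟩))
  · apply sup_le
    · rw [fR, inf_sSup_eq]
      apply iSup₂_le
      rintro b ⟨z, hz, rfl⟩
      exact le_sSup ⟨x, z, inf_eq_left.mpr hz, rfl⟩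
    · rw [fR, sSup_inf_eq]
      apply iSup₂_le
      rintro b ⟨y, hy, rfl⟩
      exact le_sSup ⟨y, x, inf_eq_right.mpr hy, rfl⟩

theorem stmt_12 (f g : I → I) :
    meetConv f g = f ↔ ∀ x, fR f x ⊓ g x ≤ f x ∧ f x ≤ fR g x := by
  constructor
  · intro h x
    have hx : (f x ⊓ fR g x) ⊔ (fR f x ⊓ g x) = f x := by
      rw [← meetConv_eq, h]
    constructor
    · exact le_sup_right.trans hx.le
    · have h2 : f x ≤ (f x ⊓ fR g x) ⊔ (fR f x ⊓ g x) := hx.ge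
      rcases le_sup_iff.mp h2 with h3 | h3
      · exact h3.trans inf_le_right
      · exact (h3.trans inf_le_right).trans (self_le_fR g x)
  · intro h
    funext x
    rw [meetConv_eq, inf_eq_left.mpr (h x).2, sup_eq_left.mpr (h x).1]
end

section
/- Let T : [0,1]² → [0,1] be increasing in each argument. Then T is (jointly) continuous if and only if for all x₀, y₀ ∈ [0,1], the functions y ↦ T(x₀, y) and x ↦ T(x, y₀) are continuous. -/
/-!
Continuity at `(x₀, y₀)` is tested on open order-convex sets `V ∋ T x₀ y₀`. Continuity of
`T · y₀` gives an interval neighbourhood `[a, b]` of `x₀` on which `T · y₀` stays in `V`, in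
particular at the endpoints `a` and `b`; continuity of `T a` and `T b` keeps `T a y` and `T b y`
in `V` for `y` near `y₀`, and monotonicity in the first argument traps `T x y` between them for
`x ∈ [a, b]`.
-/

open Filter Function Set Topology

section SeparatelyContinuous

variable {α β γ : Type*} [TopologicalSpace α] [LinearOrder α] [OrderTopology α]
  [TopologicalSpace β] [TopologicalSpace γ]

theorem eventually_mem_of_monotone_left [Preorder γ] {T : α → β → γ}
    (hmono : ∀ y, Monotone (T · y)) {x₀ : α} {y₀ : β} (hx : ContinuousAt (T · y₀) x₀)
    (hy : ∀ x, ContinuousAt (T x) y₀) {V : Set γ} (hVo : IsOpen V) (hVc : V.OrdConnected)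
    (hV : T x₀ y₀ ∈ V) : ∀ᶠ p in 𝓝 (x₀, y₀), T p.1 p.2 ∈ V := by
  obtain ⟨a, b, hab, hnhds, hsub⟩ :=
    exists_Icc_mem_subset_of_mem_nhds (hx.preimage_mem_nhds (hVo.mem_nhds hV))
  have ha : T a y₀ ∈ V := hsub ⟨le_rfl, hab.1.trans hab.2⟩
  have hb : T b y₀ ∈ V := hsub ⟨hab.1.trans hab.2, le_rfl⟩
  have hy' : ∀ᶠ y in 𝓝 y₀, T a y ∈ V ∧ T b y ∈ V :=
    ((hy a).eventually_mem (hVo.mem_nhds ha)).and ((hy b).eventually_mem (hVo.mem_nhds hb))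
  rw [nhds_prod_eq]
  filter_upwards [prod_mem_prod hnhds hy'] with ⟨x, y⟩ ⟨hx, hay, hby⟩
  exact hVc.out hay hby ⟨hmono y hx.1, hmono y hx.2⟩

theorem continuousAt_uncurry_of_monotone_left [LinearOrder γ] [OrderTopology γ]
    {T : α → β → γ} (hmono : ∀ y, Monotone (T · y)) {x₀ : α} {y₀ : β}
    (hx : ContinuousAt (T · y₀) x₀) (hy : ∀ x, ContinuousAt (T x) y₀) :
    ContinuousAt (uncurry T) (x₀, y₀) :=
  tendsto_order.2
    ⟨fun _ hl => eventually_mem_of_monotone_left hmono hx hy isOpen_Ioi ordConnected_Ioi hl,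
      fun _ hu => eventually_mem_of_monotone_left hmono hx hy isOpen_Iio ordConnected_Iio hu⟩

theorem continuous_uncurry_of_monotone_left [LinearOrder γ] [OrderTopology γ]
    {T : α → β → γ} (hmono : ∀ y, Monotone (T · y)) (hx : ∀ y, Continuous (T · y))
    (hy : ∀ x, Continuous (T x)) : Continuous (uncurry T) :=
  continuous_iff_continuousAt.2 fun p =>
    continuousAt_uncurry_of_monotone_left hmono (hx p.2).continuousAt fun x => (hy x).continuousAt

end SeparatelyContinuous

open unitInterval

theorem stmt_15 (T : I → I → I)
    (hmono : ∀ x x' y y', x ≤ x' → y ≤ y' → T x y ≤ T x' y') :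
    Continuous (fun p : I × I => T p.1 p.2) ↔
      ∀ x₀ y₀ : I, Continuous (fun y => T x₀ y) ∧ Continuous (fun x => T x y₀) := by
  refine ⟨fun h x₀ y₀ => ⟨h.uncurry_left x₀, h.uncurry_right y₀⟩, fun h => ?_⟩
  exact continuous_uncurry_of_monotone_left (fun y _ _ hxx' => hmono _ _ y y hxx' le_rfl)
    (fun y => (h y y).2) (fun x => (h x x).1)
end

section
/- Let Δ be a t-norm on [0,1] and ★ a binary operation on [0,1] with 1 ★ 0 = 0 and 1 ★ 1 = 1. Define (f ∧ g)(x) = sup{ f(y) ★ g(z) : y Δ z = x }. If for every closed interval [a,b] ⊆ [0,1] the convolution of the characteristic function of [0,1] with the characteristic function of [a,b] equals the characteristic function of [0,b] (axiom (O5)), then for every b ∈ [0,1] the function x ↦ x Δ b is continuous, and hence Δ is a continuous t-norm. -/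
open unitInterval Classical

/-- convolution `(f ∧ g)(x) = sup { star (f y) (g z) : delta y z = x }` -/
noncomputable def conv (star delta : I → I → I) (f g : I → I) (x : I) : I :=
  sSup {v | ∃ y z, delta y z = x ∧ v = star (f y) (g z)}

/-- characteristic function of a set -/
noncomputable def ind (B : Set I) : I → I := fun x => if x ∈ B then 1 else 0

/-
Monotonicity and `1 Δ b = b` confine `x ↦ x Δ b` to `[0, b]`, and (O5) for `a = b` makes it onto
`[0, b]`: since `1 ★ 0 = 0`, the supremum defining the convolution at `v` can only be nonzero if
`v = y Δ b` for some `y`. A monotone map whose range is an interval has no jumps, so it is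
continuous. Finally, a map on a product of linear orders that is monotone and separately continuous
is jointly continuous: near `(x₀, y₀)` it is squeezed between its values at corners `(a, c)` and
`(b, d)` chosen by continuity of the sections.
-/

open Set

theorem Monotone.continuous_of_ordConnected_range {α β : Type*} [LinearOrder α]
    [TopologicalSpace α] [OrderTopology α] [LinearOrder β] [TopologicalSpace β] [OrderTopology β]
    [DenselyOrdered β] {f : α → β} (hf : Monotone f) (hrange : (range f).OrdConnected) :
    Continuous f :=
  continuous_subtype_val.comp <|
    Monotone.continuous_of_surjective (f := rangeFactorization f) (fun _ _ h => hf h)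
      rangeFactorization_surjective

theorem Monotone.continuous_of_separatelyContinuous {α β γ : Type*} [LinearOrder α]
    [TopologicalSpace α] [OrderTopology α] [LinearOrder β] [TopologicalSpace β] [OrderTopology β]
    [LinearOrder γ] [TopologicalSpace γ] [OrderTopology γ] {f : α × β → γ} (hf : Monotone f)
    (hfst : ∀ y, Continuous fun x => f (x, y)) (hsnd : ∀ x, Continuous fun y => f (x, y)) :
    Continuous f := by
  refine continuous_iff_continuousAt.2 fun ⟨x₀, y₀⟩ =>
    tendsto_order.2 ⟨fun l hl => ?_, fun u hu => ?_⟩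
  · obtain ⟨c, d, hy₀, hcd, hcd_sub⟩ := exists_Icc_mem_subset_of_mem_nhds
      ((hsnd x₀).continuousAt.preimage_mem_nhds (Ioi_mem_nhds hl))
    obtain ⟨a, b, hx₀, hab, hab_sub⟩ := exists_Icc_mem_subset_of_mem_nhds
      ((hfst c).continuousAt.preimage_mem_nhds
        (Ioi_mem_nhds (hcd_sub (left_mem_Icc.2 (hy₀.1.trans hy₀.2)))))
    filter_upwards [prod_mem_nhds hab hcd] with p hp
    exact (hab_sub (left_mem_Icc.2 (hx₀.1.trans hx₀.2))).trans_le (hf ⟨hp.1.1, hp.2.1⟩)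
  · obtain ⟨c, d, hy₀, hcd, hcd_sub⟩ := exists_Icc_mem_subset_of_mem_nhds
      ((hsnd x₀).continuousAt.preimage_mem_nhds (Iio_mem_nhds hu))
    obtain ⟨a, b, hx₀, hab, hab_sub⟩ := exists_Icc_mem_subset_of_mem_nhds
      ((hfst d).continuousAt.preimage_mem_nhds
        (Iio_mem_nhds (hcd_sub (right_mem_Icc.2 (hy₀.1.trans hy₀.2)))))
    filter_upwards [prod_mem_nhds hab hcd] with p hp
    exact (hf ⟨hp.1.2, hp.2.2⟩).trans_lt (hab_sub (right_mem_Icc.2 (hx₀.1.trans hx₀.2)))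

theorem exists_delta_eq_of_conv_ind_ne_zero {star delta : I → I → I} (h10 : star 1 0 = 0)
    {B : Set I} {v : I} (hv : conv star delta (ind univ) (ind B) v ≠ 0) :
    ∃ y, ∃ z ∈ B, delta y z = v := by
  by_contra! hne
  refine hv (le_antisymm (sSup_le ?_) nonneg')
  rintro w ⟨y, z, hyz, rfl⟩
  simp [ind, show z ∉ B from fun hz => hne y z hz hyz, h10]

theorem range_delta_left_eq_Icc {star delta : I → I → I}
    (hmono : ∀ x x' y y', x ≤ x' → y ≤ y' → delta x y ≤ delta x' y')
    (hone : ∀ x, delta 1 x = x) (h10 : star 1 0 = 0) {b : I}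
    (hO5 : conv star delta (ind univ) (ind (Icc b b)) = ind (Icc 0 b)) :
    range (fun x => delta x b) = Icc 0 b := by
  ext v
  constructor
  · rintro ⟨x, rfl⟩
    exact ⟨nonneg', (hmono x 1 b b le_one' le_rfl).trans_eq (hone b)⟩
  · intro hv
    have hconv : conv star delta (ind univ) (ind (Icc b b)) v ≠ 0 := by
      rw [hO5, ind, if_pos hv]
      exact one_ne_zero
    obtain ⟨y, z, hz, rfl⟩ := exists_delta_eq_of_conv_ind_ne_zero h10 hconv
    exact ⟨y, by rw [le_antisymm hz.2 hz.1]⟩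

theorem stmt_19_general (delta : I → I → I)
    (hcomm : ∀ x y, delta x y = delta y x)
    (hmono : ∀ x x' y y', x ≤ x' → y ≤ y' → delta x y ≤ delta x' y')
    (hone : ∀ x, delta 1 x = x)
    (star : I → I → I)
    (h10 : star 1 0 = 0)
    (hO5 : ∀ a b : I, a ≤ b →
      conv star delta (ind Set.univ) (ind (Set.Icc a b)) = ind (Set.Icc 0 b)) :
    (∀ b : I, Continuous (fun x => delta x b)) ∧
      Continuous (fun p : I × I => delta p.1 p.2) := by
  have hleft : ∀ b : I, Continuous (fun x => delta x b) := fun b =>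
    Monotone.continuous_of_ordConnected_range (fun x x' h => hmono x x' b b h le_rfl)
      (range_delta_left_eq_Icc hmono hone h10 (hO5 b b le_rfl) ▸ ordConnected_Icc)
  have hright : ∀ a : I, Continuous (fun y => delta a y) := fun a => by
    simpa only [hcomm a] using hleft a
  exact ⟨hleft, Monotone.continuous_of_separatelyContinuous
    (fun p q h => hmono _ _ _ _ h.1 h.2) hleft hright⟩

theorem stmt_19 (delta : I → I → I)
    (hcomm : ∀ x y, delta x y = delta y x)
    (hassoc : ∀ x y z, delta (delta x y) z = delta x (delta y z))
    (hmono : ∀ x x' y y', x ≤ x' → y ≤ y' → delta x y ≤ delta x' y')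
    (hone : ∀ x, delta 1 x = x)
    (star : I → I → I)
    (h10 : star 1 0 = 0) (h11 : star 1 1 = 1)
    (hO5 : ∀ a b : I, a ≤ b →
      conv star delta (ind Set.univ) (ind (Set.Icc a b)) = ind (Set.Icc 0 b)) :
    (∀ b : I, Continuous (fun x => delta x b)) ∧
      Continuous (fun p : I × I => delta p.1 p.2) :=
  stmt_19_general delta hcomm hmono hone star h10 hO5
end
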